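/- arXiv:2603.11570 — 5 statements merged into one kernel-verified Lean document; each statement's English description precedes it below -/
import Mathlib

section
/- Let d ≥ 1 be an integer, α ∈ (0,2] and t > 0. If μ is a probability measure on ℝ^d whose characteristic function satisfies χ_μ(ξ) = (1 + ‖ξ‖^α)^{-t} for all ξ ∈ ℝ^d, then μ is self-decomposable: for every real b > 1 there exists a probability measure ρ_b on ℝ^d such that χ_μ(ξ) = χ_μ(b^{-1}ξ) · χ_{ρ_b}(ξ) for all ξ ∈ ℝ^d. -/
/-!
Write `s = ‖ξ‖ ^ α` and `c = b ^ (-α)`; the factor `ρ_b` must have characteristic function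
`((1 + c s) / (1 + s)) ^ t`. The `n`-fold convolution power of `μ` has transform
`(1 + s) ^ (-p)` with `p = t n ≥ 2`, and since
`∫₀¹ (p - 1) (1 - v) ^ (p - 2) (1 + v s) ^ (-p) dv = (1 + s)⁻¹`, rescaling it by `V ^ (1 / α)`
with `V` of density `(p - 1) (1 - v) ^ (p - 2)` on `(0, 1]` yields a law `ν` with transform
`(1 + s)⁻¹`. Rescaling `ν` by `U ^ (1 / α)`, where `U` has density `1 / (u log (1 / c))` on
`(c, 1]`, gives the transform `1 - log ((1 + s) / (1 + c s)) / log (1 / c)`, and the compound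
Poisson law with rate `t log (1 / c)` and these jumps has transform
`exp (-t log ((1 + s) / (1 + c s))) = ((1 + c s) / (1 + s)) ^ t`.
-/

open MeasureTheory

noncomputable def charFunOf {d : ℕ} (μ : Measure (EuclideanSpace ℝ (Fin d)))
    (ξ : EuclideanSpace ℝ (Fin d)) : ℂ :=
  ∫ x, Complex.exp (Complex.I * (inner ℝ ξ x : ℝ)) ∂μ

open ProbabilityTheory Set
open scoped NNReal Nat

theorem hasDerivAt_beta_mixture_primitive {p s v : ℝ} (hp : 2 ≤ p) (hs : 0 ≤ s)
    (hv : v ∈ Icc (0 : ℝ) 1) :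
    HasDerivAt (fun v => -(1 + s)⁻¹ * ((1 - v) ^ (p - 1) * (1 + v * s) ^ (1 - p)))
      ((p - 1) * (1 - v) ^ (p - 2) * (1 + v * s) ^ (-p)) v := by
  have hv1 : 0 ≤ 1 - v := by linarith [hv.2]
  have hvs : 0 < 1 + v * s := by nlinarith [hv.1]
  have hA := ((hasDerivAt_id' v).const_sub 1).rpow_const (p := p - 1) (Or.inr (by linarith))
  have hB := (((hasDerivAt_id' v).mul_const s).const_add 1).rpow_const (p := 1 - p)
    (Or.inl hvs.ne')
  refine ((hA.mul hB).const_mul (-(1 + s)⁻¹)).congr_deriv ?_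
  rw [show p - 1 - 1 = p - 2 by ring, show 1 - p - 1 = -p by ring,
    show p - 1 = (p - 2) + 1 by ring, Real.rpow_add_one' hv1 (by linarith),
    show 1 - p = -p + 1 by ring, Real.rpow_add_one hvs.ne']
  field_simp
  ring

theorem integral_beta_mixture {p s : ℝ} (hp : 2 ≤ p) (hs : 0 ≤ s) :
    ∫ v in (0 : ℝ)..1, (p - 1) * (1 - v) ^ (p - 2) * (1 + v * s) ^ (-p) = (1 + s)⁻¹ := by
  have hI : uIcc (0 : ℝ) 1 = Icc 0 1 := uIcc_of_le zero_le_one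
  rw [intervalIntegral.integral_eq_sub_of_hasDerivAt
    (fun v hv => hasDerivAt_beta_mixture_primitive hp hs (hI ▸ hv))
    (ContinuousOn.intervalIntegrable ?_)]
  · simp [Real.zero_rpow (by linarith : p - 1 ≠ 0)]
  · rw [hI]
    refine (continuousOn_const.mul ((continuousOn_const.sub continuousOn_id).rpow_const
      fun _ _ => Or.inr (by linarith))).mul
      ((continuousOn_const.add (continuousOn_id.mul continuousOn_const)).rpow_const
        fun v hv => Or.inl (show 1 + v * s ≠ 0 by nlinarith [hv.1]))

theorem integral_inv_mul_inv_one_add_mul {c s : ℝ} (hc : 0 < c) (hs : 0 ≤ s) :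
    ∫ u in c..1, u⁻¹ * (1 + u * s)⁻¹
      = Real.log (1 + c * s) - Real.log c - Real.log (1 + s) := by
  have hpos : ∀ u ∈ uIcc c 1, 0 < u := fun u hu =>
    lt_of_lt_of_le (lt_min hc one_pos) hu.1
  have hderiv : ∀ u ∈ uIcc c 1,
      HasDerivAt (fun u => Real.log u - Real.log (1 + u * s)) (u⁻¹ * (1 + u * s)⁻¹) u := by
    intro u hu
    have hu := hpos u hu
    have hus : 0 < 1 + u * s := by positivity
    refine ((Real.hasDerivAt_log hu.ne').sub
      ((((hasDerivAt_id' u).mul_const s).const_add 1).log hus.ne')).congr_deriv ?_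
    field_simp
    ring
  rw [intervalIntegral.integral_eq_sub_of_hasDerivAt hderiv
    (ContinuousOn.intervalIntegrable ?_)]
  · simp only [Real.log_one, one_mul, zero_sub]
    ring
  · exact (continuousOn_id.inv₀ fun u hu => (hpos u hu).ne').mul
      ((continuousOn_const.add (continuousOn_id.mul continuousOn_const)).inv₀
        fun u hu => show 1 + u * s ≠ 0 by have := hpos u hu; positivity)

noncomputable def intervalDensity (g : ℝ → ℝ) (a b : ℝ) : Measure ℝ :=
  (volume.restrict (Ioc a b)).withDensity fun v => ENNReal.ofReal (g v)

section intervalDensity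

variable {g : ℝ → ℝ} {a b : ℝ}

theorem integral_intervalDensity {F : Type*} [NormedAddCommGroup F] [NormedSpace ℝ F]
    (hab : a ≤ b) (hg0 : ∀ v ∈ Ioc a b, 0 ≤ g v) (hg : IntervalIntegrable g volume a b)
    (f : ℝ → F) :
    ∫ v, f v ∂intervalDensity g a b = ∫ v in a..b, g v • f v := by
  rw [intervalDensity, integral_withDensity_eq_integral_toReal_smul₀
    hg.1.aemeasurable.ennreal_ofReal (ae_of_all _ fun _ => ENNReal.ofReal_lt_top),
    intervalIntegral.integral_of_le hab]
  refine setIntegral_congr_fun measurableSet_Ioc fun v hv => ?_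
  rw [ENNReal.toReal_ofReal (hg0 v hv)]

theorem isProbabilityMeasure_intervalDensity (hab : a ≤ b) (hg0 : ∀ v ∈ Ioc a b, 0 ≤ g v)
    (hg : IntervalIntegrable g volume a b) (h1 : ∫ v in a..b, g v = 1) :
    IsProbabilityMeasure (intervalDensity g a b) := by
  constructor
  rw [intervalDensity, withDensity_apply _ MeasurableSet.univ, Measure.restrict_univ,
    ← ofReal_integral_eq_lintegral_ofReal hg.1 (ae_restrict_of_forall_mem measurableSet_Ioc hg0),
    ← intervalIntegral.integral_of_le hab, h1, ENNReal.ofReal_one]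

end intervalDensity

section charFun

variable {E : Type*} [NormedAddCommGroup E] [InnerProductSpace ℝ E]

theorem norm_rpow_inv_smul_rpow {α v : ℝ} (hα : α ≠ 0) (hv : 0 ≤ v) (ζ : E) :
    ‖v ^ α⁻¹ • ζ‖ ^ α = v * ‖ζ‖ ^ α := by
  rw [norm_smul, Real.norm_of_nonneg (Real.rpow_nonneg hv _),
    Real.mul_rpow (Real.rpow_nonneg hv _) (norm_nonneg _), Real.rpow_inv_rpow hv hα]

variable [MeasurableSpace E] [BorelSpace E] [SecondCountableTopology E]

noncomputable def scaleMixture (σ : ℝ → ℝ) (θ : Measure ℝ) (μ : Measure E) : Measure E :=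
  (θ.prod μ).map fun q => σ q.1 • q.2

section scaleMixture

variable {σ : ℝ → ℝ} {θ : Measure ℝ} {μ : Measure E}

theorem isProbabilityMeasure_scaleMixture (hσ : Measurable σ) [IsProbabilityMeasure θ]
    [IsProbabilityMeasure μ] : IsProbabilityMeasure (scaleMixture σ θ μ) :=
  Measure.isProbabilityMeasure_map (by fun_prop)

theorem charFun_scaleMixture (hσ : Measurable σ) [IsFiniteMeasure θ] [IsFiniteMeasure μ]
    (t : E) :
    charFun (scaleMixture σ θ μ) t = ∫ v, charFun μ (σ v • t) ∂θ := by
  rw [charFun_apply, scaleMixture, integral_map (by fun_prop) (by fun_prop),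
    integral_prod _ ((integrable_const (1 : ℝ)).mono (by fun_prop) (by simp))]
  simp_rw [charFun_apply, real_inner_smul_left, real_inner_smul_right]

end scaleMixture

theorem charFun_scaleMixture_intervalDensity {μ : Measure E} [IsFiniteMeasure μ] {α : ℝ}
    (hα : α ≠ 0) {f : ℝ → ℝ} (hμ : ∀ ζ, charFun μ ζ = f (‖ζ‖ ^ α)) {g : ℝ → ℝ} {a b : ℝ}
    (ha : 0 ≤ a) (hab : a ≤ b) (hg0 : ∀ v ∈ Ioc a b, 0 ≤ g v)
    (hg : IntervalIntegrable g volume a b) (ζ : E) :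
    charFun (scaleMixture (· ^ α⁻¹) (intervalDensity g a b) μ) ζ
      = ((∫ v in a..b, g v * f (v * ‖ζ‖ ^ α) : ℝ) : ℂ) := by
  have : IsFiniteMeasure (intervalDensity g a b) := isFiniteMeasure_withDensity_ofReal hg.1.2
  rw [charFun_scaleMixture (by fun_prop), integral_intervalDensity hab hg0 hg,
    ← intervalIntegral.integral_ofReal]
  refine intervalIntegral.integral_congr fun v hv => ?_
  rw [uIcc_of_le hab] at hv
  simp only [hμ, norm_rpow_inv_smul_rpow hα (ha.trans hv.1), Complex.real_smul,
    Complex.ofReal_mul]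

noncomputable def convPow (μ : Measure E) : ℕ → Measure E
  | 0 => Measure.dirac 0
  | n + 1 => convPow μ n ∗ μ

instance isProbabilityMeasure_convPow (μ : Measure E) [IsProbabilityMeasure μ] (n : ℕ) :
    IsProbabilityMeasure (convPow μ n) := by
  induction n with
  | zero => rw [convPow]; infer_instance
  | succ n ih => rw [convPow]; infer_instance

theorem charFun_convPow (μ : Measure E) [IsProbabilityMeasure μ] (n : ℕ) (t : E) :
    charFun (convPow μ n) t = charFun μ t ^ n := by
  induction n with
  | zero => simp [convPow]
  | succ n ih => rw [convPow, charFun_conv, ih, pow_succ]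

noncomputable def compoundPoisson (r : ℝ≥0) (μ : Measure E) : Measure E :=
  Measure.sum fun n => ENNReal.ofReal (Real.exp (-r) * r ^ n / n !) • convPow μ n

instance isProbabilityMeasure_compoundPoisson (r : ℝ≥0) (μ : Measure E)
    [IsProbabilityMeasure μ] : IsProbabilityMeasure (compoundPoisson r μ) := by
  constructor
  simp only [compoundPoisson, Measure.sum_apply _ MeasurableSet.univ, Measure.smul_apply,
    measure_univ, smul_eq_mul, mul_one]
  rw [← ENNReal.ofReal_tsum_of_nonneg (fun n => by positivity)
    (hasSum_one_poissonMeasure r).summable, (hasSum_one_poissonMeasure r).tsum_eq,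
    ENNReal.ofReal_one]

theorem charFun_compoundPoisson (r : ℝ≥0) (μ : Measure E) [IsProbabilityMeasure μ] (t : E) :
    charFun (compoundPoisson r μ) t = Complex.exp (r * (charFun μ t - 1)) := by
  have hint :
      Integrable (fun x => Complex.exp (inner ℝ x t * Complex.I)) (compoundPoisson r μ) :=
    (integrable_const (1 : ℝ)).mono (by fun_prop) (by simp)
  have hterm (n : ℕ) : ∫ x, Complex.exp (inner ℝ x t * Complex.I)
      ∂(ENNReal.ofReal (Real.exp (-r) * r ^ n / n !) • convPow μ n)
        = (Real.exp (-r) * r ^ n / n ! : ℝ) • charFun μ t ^ n := by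
    rw [integral_smul_measure, ENNReal.toReal_ofReal (by positivity), ← charFun_apply,
      charFun_convPow]
  rw [compoundPoisson] at hint
  rw [charFun_apply, compoundPoisson, integral_sum_measure hint, tsum_congr hterm]
  calc ∑' n, (Real.exp (-r) * r ^ n / n ! : ℝ) • charFun μ t ^ n
  _ = ∑' n, Real.exp (-r) * ((r * charFun μ t) ^ n / n !) := by
      congr with n
      rw [Complex.real_smul, mul_pow]
      push_cast
      ring
  _ = Real.exp (-r) * Complex.exp (r * charFun μ t) := by
      rw [tsum_mul_left, (NormedSpace.expSeries_div_hasSum_exp (r * charFun μ t)).tsum_eq,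
        Complex.exp_eq_exp_ℂ]
  _ = Complex.exp (r * (charFun μ t - 1)) := by
      rw [Complex.ofReal_exp, ← Complex.exp_add]
      push_cast
      ring_nf

theorem exists_charFun_eq_inv_one_add {α t : ℝ} (hα : α ≠ 0) (ht : 0 < t) (μ : Measure E)
    [IsProbabilityMeasure μ] (hμ : ∀ ζ, charFun μ ζ = (((1 + ‖ζ‖ ^ α) ^ t)⁻¹ : ℝ)) :
    ∃ ν : Measure E, IsProbabilityMeasure ν ∧ ∀ ζ, charFun ν ζ = ((1 + ‖ζ‖ ^ α)⁻¹ : ℝ) := by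
  -- `p ≥ 2` makes the mixing density `(p - 1) (1 - v) ^ (p - 2)` continuous on `[0, 1]`.
  set n := ⌈2 / t⌉₊
  set p := t * n
  have hp : 2 ≤ p := by
    have := Nat.le_ceil (2 / t)
    rw [div_le_iff₀ ht] at this
    linarith
  have hμn (ζ : E) : charFun (convPow μ n) ζ = ((1 + ‖ζ‖ ^ α) ^ (-p) : ℝ) := by
    have h1s : 0 < 1 + ‖ζ‖ ^ α := by positivity
    rw [charFun_convPow, hμ, ← Complex.ofReal_pow, inv_pow, ← Real.rpow_natCast,
      ← Real.rpow_mul h1s.le, Real.rpow_neg h1s.le]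
  set g : ℝ → ℝ := fun v => (p - 1) * (1 - v) ^ (p - 2)
  have hg0 : ∀ v ∈ Ioc (0 : ℝ) 1, 0 ≤ g v := fun v hv => by
    have : 0 ≤ 1 - v := by linarith [hv.2]
    have : 0 ≤ p - 1 := by linarith
    positivity
  have hg : IntervalIntegrable g volume 0 1 :=
    (continuousOn_const.mul ((continuousOn_const.sub continuousOn_id).rpow_const
      fun _ _ => Or.inr (by linarith))).intervalIntegrable
  have hg1 : ∫ v in (0 : ℝ)..1, g v = 1 := by
    simpa [g, intervalIntegral.integral_const_mul] using integral_beta_mixture hp le_rfl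
  have := isProbabilityMeasure_intervalDensity zero_le_one hg0 hg hg1
  refine ⟨scaleMixture (· ^ α⁻¹) (intervalDensity g 0 1) (convPow μ n),
    isProbabilityMeasure_scaleMixture (by fun_prop), fun ζ => ?_⟩
  rw [charFun_scaleMixture_intervalDensity hα (f := fun s => (1 + s) ^ (-p)) hμn le_rfl
    zero_le_one hg0 hg, integral_beta_mixture hp (by positivity)]

theorem exists_charFun_eq_one_sub_log_div {α c : ℝ} (hα : α ≠ 0) (hc0 : 0 < c) (hc1 : c < 1)
    (ν : Measure E) [IsProbabilityMeasure ν] (hν : ∀ ζ, charFun ν ζ = ((1 + ‖ζ‖ ^ α)⁻¹ : ℝ)) :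
    ∃ ν' : Measure E, IsProbabilityMeasure ν' ∧ ∀ ζ, charFun ν' ζ =
      (1 - (Real.log (1 + ‖ζ‖ ^ α) - Real.log (1 + c * ‖ζ‖ ^ α)) / -Real.log c : ℝ) := by
  have hlog : Real.log c < 0 := Real.log_neg hc0 hc1
  set g : ℝ → ℝ := fun u => u⁻¹ / -Real.log c
  have hg0 : ∀ u ∈ Ioc c 1, 0 ≤ g u := fun u hu =>
    div_nonneg (inv_nonneg.mpr (hc0.trans hu.1).le) (neg_nonneg.mpr hlog.le)
  have hg : IntervalIntegrable g volume c 1 :=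
    ((continuousOn_id.inv₀ fun u hu => (hc0.trans_le hu.1).ne').div_const _
      ).intervalIntegrable_of_Icc hc1.le
  have hint (s : ℝ) (hs : 0 ≤ s) : ∫ u in c..1, g u * (1 + u * s)⁻¹
      = 1 - (Real.log (1 + s) - Real.log (1 + c * s)) / -Real.log c := by
    simp_rw [g, div_mul_eq_mul_div, intervalIntegral.integral_div,
      integral_inv_mul_inv_one_add_mul hc0 hs]
    field_simp [hlog.ne]
    ring
  have := isProbabilityMeasure_intervalDensity hc1.le hg0 hg (by simpa using hint 0 le_rfl)
  refine ⟨scaleMixture (· ^ α⁻¹) (intervalDensity g c 1) ν,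
    isProbabilityMeasure_scaleMixture (by fun_prop), fun ζ => ?_⟩
  rw [charFun_scaleMixture_intervalDensity hα (f := fun s => (1 + s)⁻¹) hν hc0.le hc1.le
    hg0 hg, hint _ (by positivity)]

theorem exists_charFun_eq_div_rpow {α c t : ℝ} (hα : α ≠ 0) (hc0 : 0 < c) (hc1 : c < 1)
    (ht : 0 ≤ t) (ν : Measure E) [IsProbabilityMeasure ν]
    (hν : ∀ ζ, charFun ν ζ = ((1 + ‖ζ‖ ^ α)⁻¹ : ℝ)) :
    ∃ ρ : Measure E, IsProbabilityMeasure ρ ∧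
      ∀ ζ, charFun ρ ζ = (((1 + c * ‖ζ‖ ^ α) / (1 + ‖ζ‖ ^ α)) ^ t : ℝ) := by
  have hL : 0 < -Real.log c := neg_pos.mpr (Real.log_neg hc0 hc1)
  obtain ⟨ν', _, hν'⟩ := exists_charFun_eq_one_sub_log_div hα hc0 hc1 ν hν
  refine ⟨compoundPoisson (t * -Real.log c).toNNReal ν', inferInstance, fun ζ => ?_⟩
  have hs : 0 < 1 + ‖ζ‖ ^ α := by positivity
  have hcs : 0 < 1 + c * ‖ζ‖ ^ α := by positivity
  rw [charFun_compoundPoisson, Real.coe_toNNReal _ (by positivity), hν',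
    Real.rpow_def_of_pos (div_pos hcs hs),
    Real.log_div hcs.ne' hs.ne', Complex.ofReal_exp]
  congr 1
  have hlog : (Real.log c : ℂ) ≠ 0 := Complex.ofReal_ne_zero.mpr (Real.log_neg hc0 hc1).ne
  push_cast
  field_simp
  ring

end charFun

theorem charFunOf_eq_charFun {d : ℕ} (μ : Measure (EuclideanSpace ℝ (Fin d)))
    (ξ : EuclideanSpace ℝ (Fin d)) : charFunOf μ ξ = charFun μ ξ := by
  simp only [charFunOf, charFun_apply, real_inner_comm ξ, mul_comm Complex.I]

theorem geometric_stable_selfdecomposable_general {d : ℕ} {α t : ℝ}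
    (hα : α ∈ Set.Ioc (0 : ℝ) 2) (ht : 0 < t)
    (μ : Measure (EuclideanSpace ℝ (Fin d))) [IsProbabilityMeasure μ]
    (hχ : ∀ ξ : EuclideanSpace ℝ (Fin d),
      charFunOf μ ξ = ((((1 + ‖ξ‖ ^ α) ^ t)⁻¹ : ℝ) : ℂ)) :
    ∀ b : ℝ, 1 < b → ∃ ρ : Measure (EuclideanSpace ℝ (Fin d)),
      IsProbabilityMeasure ρ ∧
      ∀ ξ : EuclideanSpace ℝ (Fin d),
        charFunOf μ ξ = charFunOf μ (b⁻¹ • ξ) * charFunOf ρ ξ := by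
  simp only [charFunOf_eq_charFun] at hχ ⊢
  intro b hb
  have hb0 : 0 < b⁻¹ := inv_pos.mpr (zero_lt_one.trans hb)
  set c := b⁻¹ ^ α
  have hc0 : 0 < c := Real.rpow_pos_of_pos hb0 α
  have hc1 : c < 1 := Real.rpow_lt_one hb0.le (inv_lt_one_of_one_lt₀ hb) hα.1
  obtain ⟨ν, _, hν⟩ := exists_charFun_eq_inv_one_add hα.1.ne' ht μ hχ
  obtain ⟨ρ, hρP, hρ⟩ := exists_charFun_eq_div_rpow hα.1.ne' hc0 hc1 ht.le ν hν
  refine ⟨ρ, hρP, fun ξ => ?_⟩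
  have hs : 0 < 1 + ‖ξ‖ ^ α := by positivity
  have hcs : 0 < 1 + c * ‖ξ‖ ^ α := by positivity
  have hscale : ‖b⁻¹ • ξ‖ ^ α = c * ‖ξ‖ ^ α := by
    rw [norm_smul, Real.norm_of_nonneg hb0.le, Real.mul_rpow hb0.le (norm_nonneg _)]
  rw [hχ, hχ, hρ, hscale, ← Complex.ofReal_mul, Real.div_rpow hcs.le hs.le]
  have := Real.rpow_pos_of_pos hcs t
  congr 1
  field_simp

/-- Self-decomposability of the geometric α-stable distributions: if a probability
measure on `ℝ^d` has characteristic function `(1 + ‖ξ‖^α)^{-t}`, then for every `b > 1`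
there is a probability measure `ρ_b` with `χ_μ(ξ) = χ_μ(b⁻¹ ξ) · χ_{ρ_b}(ξ)`. -/
theorem geometric_stable_selfdecomposable {d : ℕ} (hd : 1 ≤ d) {α t : ℝ}
    (hα : α ∈ Set.Ioc (0 : ℝ) 2) (ht : 0 < t)
    (μ : Measure (EuclideanSpace ℝ (Fin d))) [IsProbabilityMeasure μ]
    (hχ : ∀ ξ : EuclideanSpace ℝ (Fin d),
      charFunOf μ ξ = ((((1 + ‖ξ‖ ^ α) ^ t)⁻¹ : ℝ) : ℂ)) :
    ∀ b : ℝ, 1 < b → ∃ ρ : Measure (EuclideanSpace ℝ (Fin d)),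
      IsProbabilityMeasure ρ ∧
      ∀ ξ : EuclideanSpace ℝ (Fin d),
        charFunOf μ ξ = charFunOf μ (b⁻¹ • ξ) * charFunOf ρ ξ :=
  geometric_stable_selfdecomposable_general hα ht μ hχ
end

section
/- For every real ξ, log(1 + |ξ|) = ∫_ℝ (1 - cos(ξ y)) j(y) dy, where j(y) = π^{-1} ∫₀^∞ e^{-s} (s² + y²)^{-1} ds. -/
/-!
Tonelli's theorem swaps the two integrals, so for each `s > 0` one needs the cosine transform
of the Cauchy kernel, `∫ cos (t y) (s² + y²)⁻¹ dy = (π / s) e^{-s|t|}`, which follows by Fourier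
inversion from the transform `2 s / (s² + (2πw)²)` of `e^{-s|x|}`. What remains is Frullani's
integral `∫₀^∞ (e^{-s} - e^{-(1 + |ξ|) s}) / s ds = log (1 + |ξ|)`.
-/

open MeasureTheory Real Set Filter FourierTransform

theorem integral_integral_swap_of_nonneg {α β : Type*} [MeasurableSpace α] [MeasurableSpace β]
    {μ : Measure α} {ν : Measure β} [SFinite μ] [SFinite ν] {f : α → β → ℝ}
    (hf : ∀ x y, 0 ≤ f x y) (hmeas : AEStronglyMeasurable (Function.uncurry f) (μ.prod ν))
    (hsec : ∀ᵐ x ∂μ, Integrable (f x) ν) (hint : Integrable (fun x => ∫ y, f x y ∂ν) μ) :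
    ∫ x, ∫ y, f x y ∂ν ∂μ = ∫ y, ∫ x, f x y ∂μ ∂ν :=
  integral_integral_swap <| (integrable_prod_iff hmeas).2
    ⟨hsec, by simpa only [Function.uncurry_apply_pair, Real.norm_of_nonneg (hf _ _)] using hint⟩

lemma integrable_exp_neg_mul_abs {s : ℝ} (hs : 0 < s) :
    Integrable fun x : ℝ => rexp (-(s * |x|)) := by
  rw [← integrableOn_univ, ← Iic_union_Ioi (a := 0)]
  refine IntegrableOn.union ?_ ?_
  · refine (integrableOn_exp_mul_Iic hs 0).congr_fun (fun x hx => ?_) measurableSet_Iic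
    rw [abs_of_nonpos hx]
    ring_nf
  · refine (integrableOn_exp_mul_Ioi (neg_lt_zero.2 hs) 0).congr_fun (fun x hx => ?_)
      measurableSet_Ioi
    rw [abs_of_pos hx]
    ring_nf

lemma fourier_exp_neg_mul_abs {s : ℝ} (hs : 0 < s) (w : ℝ) :
    𝓕 (fun x : ℝ => (rexp (-(s * |x|)) : ℂ)) w =
      ((2 * s / (s ^ 2 + (2 * π * w) ^ 2) : ℝ) : ℂ) := by
  set b : ℂ := 2 * π * w * Complex.I with hb
  set F : ℝ → ℂ := fun x => Complex.exp (↑(-2 * π * x * w) * Complex.I) • (rexp (-(s * |x|)) : ℂ)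
  have hIic : EqOn F (fun x : ℝ => Complex.exp ((s - b) * x)) (Iic 0) := fun x hx => by
    simp only [F, abs_of_nonpos (show x ≤ 0 from hx), smul_eq_mul, Complex.ofReal_exp,
      ← Complex.exp_add, b]
    push_cast
    ring_nf
  have hIoi : EqOn F (fun x : ℝ => Complex.exp ((-s - b) * x)) (Ioi 0) := fun x hx => by
    simp only [F, abs_of_pos (show 0 < x from hx), smul_eq_mul, Complex.ofReal_exp,
      ← Complex.exp_add, b]
    push_cast
    ring_nf
  have hre_pos : 0 < (s - b : ℂ).re := by simpa [b] using hs
  have hre_neg : (-s - b : ℂ).re < 0 := by simpa [b] using hs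
  rw [fourier_real_eq_integral_exp_smul, ← intervalIntegral.integral_Iic_add_Ioi
    ((integrableOn_exp_mul_complex_Iic hre_pos 0).congr_fun hIic.symm measurableSet_Iic)
    ((integrableOn_exp_mul_complex_Ioi hre_neg 0).congr_fun hIoi.symm measurableSet_Ioi),
    setIntegral_congr_fun measurableSet_Iic hIic, setIntegral_congr_fun measurableSet_Ioi hIoi,
    integral_exp_mul_complex_Iic hre_pos, integral_exp_mul_complex_Ioi hre_neg]
  have hden : ((s ^ 2 + (2 * π * w) ^ 2 : ℝ) : ℂ) = (s - b) * -(-s - b) := by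
    push_cast
    linear_combination (by simp [hb, mul_pow] : b ^ 2 = -(2 * π * w) ^ 2)
  have h₁ : (s - b : ℂ) ≠ 0 := fun h => by simp [h] at hre_pos
  have h₂ : (-s - b : ℂ) ≠ 0 := fun h => by simp [h] at hre_neg
  rw [Complex.ofReal_div, hden]
  simp only [Complex.ofReal_zero, mul_zero, Complex.exp_zero]
  field_simp
  push_cast
  ring

lemma re_fourierInv_ofReal {g : ℝ → ℝ} (hg : Integrable g) (x : ℝ) :
    (𝓕⁻ (fun w : ℝ => (g w : ℂ)) x).re = ∫ w, cos (2 * π * w * x) * g w := by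
  rw [fourierInv_eq_fourier_neg, fourier_real_eq_integral_exp_smul, ← RCLike.re_to_complex,
    ← integral_re]
  · congr 1 with w
    rw [RCLike.re_to_complex, smul_eq_mul, Complex.re_mul_ofReal, Complex.exp_ofReal_mul_I_re]
    ring_nf
  · exact hg.ofReal.bdd_mul (by fun_prop) (c := 1)
      (.of_forall fun w => (Complex.norm_exp_ofReal_mul_I _).le)

lemma integrable_inv_sq_add_sq {s : ℝ} (hs : s ≠ 0) :
    Integrable fun y : ℝ => (s ^ 2 + y ^ 2)⁻¹ := by
  refine ((integrable_inv_one_add_sq.comp_div hs).const_mul (s ^ 2)⁻¹).congr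
    (.of_forall fun y => ?_)
  field_simp

lemma integrable_cos_mul_inv_sq_add_sq {s : ℝ} (hs : s ≠ 0) (t : ℝ) :
    Integrable fun y : ℝ => cos (t * y) * (s ^ 2 + y ^ 2)⁻¹ :=
  (integrable_inv_sq_add_sq hs).bdd_mul (by fun_prop) (c := 1)
    (.of_forall fun _ => abs_cos_le_one _)

lemma integrable_one_sub_cos_mul_inv_sq_add_sq {s : ℝ} (hs : s ≠ 0) (t : ℝ) :
    Integrable fun y : ℝ => (1 - cos (t * y)) * (s ^ 2 + y ^ 2)⁻¹ := by
  refine ((integrable_inv_sq_add_sq hs).sub (integrable_cos_mul_inv_sq_add_sq hs t)).congr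
    (.of_forall fun y => ?_)
  simp only [Pi.sub_apply]
  ring

lemma integral_cos_mul_inv_sq_add_sq {s : ℝ} (hs : 0 < s) (t : ℝ) :
    ∫ y, cos (t * y) * (s ^ 2 + y ^ 2)⁻¹ = π / s * rexp (-(s * |t|)) := by
  set g : ℝ → ℝ := fun w => 2 * s / (s ^ 2 + (2 * π * w) ^ 2)
  have hg : Integrable g := by
    simpa [g, div_eq_mul_inv] using ((integrable_inv_sq_add_sq hs.ne').comp_mul_left'
      (by positivity : 2 * π ≠ 0)).const_mul (2 * s)
  have hFf : 𝓕 (fun x : ℝ => (rexp (-(s * |x|)) : ℂ)) = fun w => (g w : ℂ) :=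
    funext (fourier_exp_neg_mul_abs hs)
  have hinv := Continuous.fourierInv_fourier_eq (by fun_prop)
    (integrable_exp_neg_mul_abs hs).ofReal (hFf ▸ hg.ofReal)
  rw [hFf] at hinv
  have hcos : ∫ w, cos (2 * π * w * t) * g w = rexp (-(s * |t|)) := by
    rw [← re_fourierInv_ofReal hg, hinv, Complex.ofReal_re]
  have hsubst := Measure.integral_comp_mul_left (fun y => cos (t * y) * (s ^ 2 + y ^ 2)⁻¹) (2 * π)
  rw [abs_of_pos (by positivity), smul_eq_mul] at hsubst
  have hrescale : ∫ w, cos (2 * π * w * t) * g w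
      = 2 * s * ∫ w, cos (t * (2 * π * w)) * (s ^ 2 + (2 * π * w) ^ 2)⁻¹ := by
    rw [← integral_const_mul]
    congr 1 with w
    simp only [g]
    ring_nf
  rw [← hcos, hrescale, hsubst]
  field_simp

lemma integral_one_sub_cos_mul_inv_sq_add_sq {s : ℝ} (hs : 0 < s) (t : ℝ) :
    ∫ y, (1 - cos (t * y)) * (s ^ 2 + y ^ 2)⁻¹ = π / s * (1 - rexp (-(s * |t|))) := by
  have hconst := integral_cos_mul_inv_sq_add_sq hs 0
  simp only [zero_mul, cos_zero, one_mul, abs_zero, mul_zero, neg_zero, exp_zero,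
    mul_one] at hconst
  simp_rw [sub_mul, one_mul]
  rw [integral_sub (integrable_inv_sq_add_sq hs.ne') (integrable_cos_mul_inv_sq_add_sq hs.ne' t),
    hconst, integral_cos_mul_inv_sq_add_sq hs]
  ring

lemma integral_exp_neg_mul_one_sub_cos_mul_inv_sq_add_sq {s : ℝ} (hs : 0 < s) (t : ℝ) :
    ∫ y, rexp (-s) * ((1 - cos (t * y)) * (s ^ 2 + y ^ 2)⁻¹)
      = π * ((rexp (-s) - rexp (-((1 + |t|) * s))) / s) := by
  rw [integral_const_mul, integral_one_sub_cos_mul_inv_sq_add_sq hs,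
    show -((1 + |t|) * s) = -s + -(s * |t|) by ring, exp_add]
  ring

lemma exp_neg_sub_exp_neg_div_le {a s : ℝ} (hs : 0 < s) :
    (rexp (-s) - rexp (-((1 + a) * s))) / s ≤ a * rexp (-s) := by
  rw [div_le_iff₀ hs, show -((1 + a) * s) = -s + -(a * s) by ring, exp_add]
  nlinarith [add_one_le_exp (-(a * s)), exp_pos (-s)]

lemma exp_neg_sub_exp_neg_div_nonneg {a s : ℝ} (ha : 0 ≤ a) (hs : 0 < s) :
    0 ≤ (rexp (-s) - rexp (-((1 + a) * s))) / s :=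
  div_nonneg (sub_nonneg.2 (exp_le_exp.2 (by nlinarith))) hs.le

lemma integrableOn_exp_neg_sub_exp_neg_div {a : ℝ} (ha : 0 ≤ a) :
    IntegrableOn (fun s => (rexp (-s) - rexp (-((1 + a) * s))) / s) (Ioi 0) := by
  refine ((exp_neg_integrableOn_Ioi 0 one_pos).const_mul a).mono'
    (Measurable.aestronglyMeasurable (by fun_prop))
    ((ae_restrict_iff' measurableSet_Ioi).2 (.of_forall fun s hs => ?_))
  rw [Real.norm_of_nonneg (exp_neg_sub_exp_neg_div_nonneg ha hs)]
  simpa using exp_neg_sub_exp_neg_div_le (a := a) hs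

lemma integral_exp_neg_sub_exp_neg_div {a : ℝ} (ha : 0 ≤ a) :
    ∫ s in Ioi 0, (rexp (-s) - rexp (-((1 + a) * s))) / s = log (1 + a) := by
  have hcont : Continuous fun x : ℝ => rexp (-x) := by fun_prop
  have := Frullani.integral_Ioi_eq (f := fun x => rexp (-x)) (a := 1) (b := 1 + a)
    (L := 1) (R := 0)
    (hcont.locallyIntegrable.locallyIntegrableOn _) one_pos (by linarith)
    ((hcont.tendsto' 0 1 (by simp)).mono_left nhdsWithin_le_nhds)
    tendsto_exp_neg_atTop_nhds_zero
    (by simpa [div_eq_inv_mul] using integrableOn_exp_neg_sub_exp_neg_div ha)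
  simpa [div_eq_inv_mul] using this

/-- Lévy–Khintchine representation of the symbol of the one-dimensional geometric
1-stable process: `log(1 + |ξ|) = ∫ (1 - cos(ξ y)) j(y) dy`, where
`j(y) = π⁻¹ ∫₀^∞ e^{-s} (s² + y²)⁻¹ ds`. -/
theorem geometric_one_stable_levy_khintchine (ξ : ℝ) :
    Real.log (1 + |ξ|) =
      ∫ y : ℝ, (1 - Real.cos (ξ * y)) *
        (π⁻¹ * ∫ s in Set.Ioi (0 : ℝ), Real.exp (-s) * (s ^ 2 + y ^ 2)⁻¹) := by
  set K : ℝ → ℝ → ℝ := fun s y => rexp (-s) * ((1 - cos (ξ * y)) * (s ^ 2 + y ^ 2)⁻¹)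
  have hK_nonneg (s y : ℝ) : 0 ≤ K s y :=
    mul_nonneg (exp_pos _).le (mul_nonneg (sub_nonneg.2 (cos_le_one _)) (by positivity))
  have hinner : EqOn (fun s => ∫ y, K s y)
      (fun s => π * ((rexp (-s) - rexp (-((1 + |ξ|) * s))) / s)) (Ioi 0) :=
    fun s hs => integral_exp_neg_mul_one_sub_cos_mul_inv_sq_add_sq hs ξ
  have hswap : ∫ s in Ioi 0, ∫ y, K s y = ∫ y, ∫ s in Ioi 0, K s y :=
    integral_integral_swap_of_nonneg hK_nonneg (Measurable.aestronglyMeasurable (by fun_prop))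
      ((ae_restrict_iff' measurableSet_Ioi).2 (.of_forall fun s hs =>
        (integrable_one_sub_cos_mul_inv_sq_add_sq (ne_of_gt hs) ξ).const_mul _))
      (IntegrableOn.congr_fun ((integrableOn_exp_neg_sub_exp_neg_div (abs_nonneg ξ)).const_mul π)
        hinner.symm measurableSet_Ioi)
  calc log (1 + |ξ|)
      = π⁻¹ * ∫ s in Ioi 0, π * ((rexp (-s) - rexp (-((1 + |ξ|) * s))) / s) := by
        rw [integral_const_mul, integral_exp_neg_sub_exp_neg_div (abs_nonneg ξ),
          inv_mul_cancel_left₀ pi_ne_zero]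
    _ = π⁻¹ * ∫ y, ∫ s in Ioi 0, K s y := by
        rw [← setIntegral_congr_fun measurableSet_Ioi hinner, hswap]
    _ = _ := by
        rw [← integral_const_mul]
        congr 1 with y
        rw [← integral_const_mul, ← integral_const_mul, ← integral_const_mul]
        congr 1 with s
        ring
end

section
/- Let d ≥ 1 be an integer and let j(x) = ∫₀^∞ (4πs)^{-d/2} exp(-‖x‖²/(4s)) e^{-s} s^{-1} ds for x ∈ ℝ^d \ {0}. Then ‖x‖^d · j(x) tends to Γ(d/2)/π^{d/2} as x → 0 in ℝ^d \ {0}. -/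
open MeasureTheory Real Filter Set

lemma vg_subst {d : ℕ} (r : ℝ) (hr : 0 < r) :
    (∫ s in Set.Ioi (0 : ℝ),
        (4 * π * s) ^ (-(d : ℝ) / 2) * Real.exp (-r ^ 2 / (4 * s)) *
          Real.exp (-s) * s⁻¹)
      = π ^ (-(d : ℝ) / 2) * r ^ (-(d : ℝ)) *
        ∫ u in Set.Ioi (0 : ℝ),
          u ^ ((d : ℝ) / 2 - 1) * Real.exp (-u) * Real.exp (-r ^ 2 / (4 * u)) := by
  set c : ℝ := r ^ 2 / 4 with hc
  have hc0 : 0 < c := by positivity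
  set h : ℝ → ℝ := fun s => (4 * π * s) ^ (-(d : ℝ) / 2) * Real.exp (-r ^ 2 / (4 * s)) *
      Real.exp (-s) * s⁻¹ with hh
  set g : ℝ → ℝ := fun x => (|(-1:ℝ)| * x ^ ((-1:ℝ) - 1)) • h (x ^ (-1:ℝ)) with hg
  have step1 : (∫ x in Ioi (0:ℝ), g x) = ∫ s in Ioi (0:ℝ), h s :=
    integral_comp_rpow_Ioi h (by norm_num)
  have step2 := integral_comp_mul_left_Ioi g 0 (inv_pos.mpr hc0)
  simp only [mul_zero, inv_inv] at step2
  rw [← step1]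
  have step3 : (∫ x in Ioi (0:ℝ), g x) = c⁻¹ • ∫ x in Ioi (0:ℝ), g (c⁻¹ * x) := by
    rw [step2, smul_smul, inv_mul_cancel₀ hc0.ne', one_smul]
  rw [step3]
  have key : ∀ u ∈ Ioi (0:ℝ),
      g (c⁻¹ * u) = c * (π ^ (-(d : ℝ) / 2) * r ^ (-(d : ℝ)) *
          (u ^ ((d : ℝ) / 2 - 1) * Real.exp (-u) * Real.exp (-r ^ 2 / (4 * u)))) := by
    intro u hu
    have hu0 : 0 < u := hu
    have hcu : (c⁻¹ * u) ^ (-1:ℝ) = c / u := by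
      rw [rpow_neg_one, mul_inv, inv_inv]; exact (div_eq_mul_inv c u).symm
    rw [hg]
    simp only [smul_eq_mul]
    rw [hcu]
    have e1 : -r ^ 2 / (4 * (c / u)) = -u := by field_simp [hc]; ring
    have e2 : (4 * π * (c / u)) ^ (-(d : ℝ) / 2)
        = π ^ (-(d : ℝ) / 2) * r ^ (-(d:ℝ)) * u ^ ((d:ℝ)/2) := by
      have h4 : 4 * π * (c / u) = (π * r ^ 2) / u := by rw [hc]; ring
      rw [h4, div_rpow (by positivity) hu0.le, mul_rpow pi_pos.le (by positivity),
        ← rpow_natCast r 2, ← rpow_mul hr.le]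
      rw [show ((2:ℕ):ℝ) * (-(d:ℝ)/2) = -(d:ℝ) by push_cast; ring]
      have hnu : u ^ (-(d:ℝ)/2) = (u ^ ((d:ℝ)/2))⁻¹ := by
        rw [neg_div, rpow_neg hu0.le]
      rw [hnu, div_eq_mul_inv, inv_inv]
    have e4 : (c⁻¹ * u) ^ ((-1:ℝ) - 1) = c ^ 2 * u ^ ((-2):ℝ) := by
      rw [show ((-1:ℝ) - 1) = (-2:ℝ) by norm_num,
        mul_rpow (by positivity) hu0.le]
      congr 1
      rw [← rpow_neg_one c, ← rpow_mul hc0.le]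
      norm_num [rpow_two]
    have e5 : -(c / u) = -r^2 / (4 * u) := by rw [hc]; ring
    rw [hh]
    simp only
    rw [e1, e2, e4, e5, inv_div]
    have hu2 : u ^ ((-2):ℝ) = (u ^ 2)⁻¹ := by rw [rpow_neg hu0.le, rpow_two]
    have hud : u ^ ((d:ℝ)/2 - 1) = u ^ ((d:ℝ)/2) * u⁻¹ := by
      rw [rpow_sub hu0, rpow_one]; rfl
    rw [hu2, hud]
    field_simp
    ring
  rw [setIntegral_congr_fun measurableSet_Ioi key, integral_const_mul, integral_const_mul,
    smul_eq_mul, ← mul_assoc, ← mul_assoc, inv_mul_cancel₀ hc0.ne', one_mul]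

lemma vg_limit {d : ℕ} (hd : 1 ≤ d) :
    Tendsto (fun x : EuclideanSpace ℝ (Fin d) =>
        ∫ u in Set.Ioi (0 : ℝ),
          u ^ ((d : ℝ) / 2 - 1) * Real.exp (-u) * Real.exp (-‖x‖ ^ 2 / (4 * u)))
      (nhdsWithin 0 {0}ᶜ) (nhds (Real.Gamma ((d : ℝ) / 2))) := by
  have hpos : 0 < (d : ℝ) / 2 := by
    have : (1:ℝ) ≤ (d:ℝ) := by exact_mod_cast hd
    linarith
  have hGamma : Real.Gamma ((d : ℝ) / 2)
      = ∫ u in Set.Ioi (0:ℝ), u ^ ((d : ℝ) / 2 - 1) * Real.exp (-u) := by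
    rw [Real.Gamma_eq_integral hpos]
    exact setIntegral_congr_fun measurableSet_Ioi fun u hu => mul_comm _ _
  rw [hGamma]
  apply tendsto_integral_filter_of_dominated_convergence
    (fun u => u ^ ((d : ℝ) / 2 - 1) * Real.exp (-u))
  · filter_upwards with x
    apply ContinuousOn.aestronglyMeasurable _ measurableSet_Ioi
    apply ContinuousOn.mul
    · apply ContinuousOn.mul
      · exact continuousOn_id.rpow_const fun u hu => Or.inl (ne_of_gt hu)
      · exact (Real.continuous_exp.comp continuous_neg).continuousOn
    · apply Real.continuous_exp.comp_continuousOn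
      exact (continuousOn_const.div ((continuous_const.mul continuous_id).continuousOn)
        fun u hu => by have h0 : (0:ℝ) < u := hu; positivity)
  · filter_upwards with x
    rw [ae_restrict_iff' measurableSet_Ioi]
    filter_upwards with u hu
    have hu0 : (0:ℝ) < u := hu
    have h1 : Real.exp (-‖x‖ ^ 2 / (4 * u)) ≤ 1 := by
      rw [Real.exp_le_one_iff]
      apply div_nonpos_of_nonpos_of_nonneg
      · exact neg_nonpos.mpr (by positivity)
      · positivity
    have h0 : 0 ≤ u ^ ((d : ℝ) / 2 - 1) * Real.exp (-u) := by positivity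
    rw [Real.norm_eq_abs, abs_of_nonneg (by positivity)]
    calc u ^ ((d : ℝ) / 2 - 1) * Real.exp (-u) * Real.exp (-‖x‖ ^ 2 / (4 * u))
        ≤ u ^ ((d : ℝ) / 2 - 1) * Real.exp (-u) * 1 := by
          exact mul_le_mul_of_nonneg_left h1 h0
      _ = _ := mul_one _
  · exact (Real.GammaIntegral_convergent hpos).congr_fun
      (fun u _ => mul_comm _ _) measurableSet_Ioi
  · rw [ae_restrict_iff' measurableSet_Ioi]
    filter_upwards with u hu
    have hu0 : (0:ℝ) < u := hu
    have hcont : Continuous fun x : EuclideanSpace ℝ (Fin d) =>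
        u ^ ((d : ℝ) / 2 - 1) * Real.exp (-u) * Real.exp (-‖x‖ ^ 2 / (4 * u)) := by
      apply continuous_const.mul
      exact Real.continuous_exp.comp ((continuous_norm.pow 2).neg.div_const _)
    have := (hcont.tendsto 0).mono_left
      (nhdsWithin_le_nhds (s := ({0}ᶜ : Set (EuclideanSpace ℝ (Fin d)))))
    simpa using this

/-- Small-space asymptotics of the Lévy density of the variance gamma (geometric
2-stable) process in dimension `d`: `‖x‖^d j(x) → Γ(d/2)/π^{d/2}` as `x → 0`, where
`j(x) = ∫₀^∞ (4πs)^{-d/2} e^{-‖x‖²/(4s)} e^{-s} s⁻¹ ds`. -/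
theorem variance_gamma_levy_density_small_space {d : ℕ} (hd : 1 ≤ d) :
    Tendsto (fun x : EuclideanSpace ℝ (Fin d) =>
        ‖x‖ ^ d *
          ∫ s in Set.Ioi (0 : ℝ),
            (4 * π * s) ^ (-(d : ℝ) / 2) * Real.exp (-‖x‖ ^ 2 / (4 * s)) *
              Real.exp (-s) * s⁻¹)
      (nhdsWithin 0 {0}ᶜ) (nhds (Real.Gamma ((d : ℝ) / 2) / π ^ ((d : ℝ) / 2))) := by
  have key := (vg_limit hd).const_mul (π ^ (-(d : ℝ) / 2))
  have hval : π ^ (-(d : ℝ) / 2) * Real.Gamma ((d : ℝ) / 2)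
      = Real.Gamma ((d : ℝ) / 2) / π ^ ((d : ℝ) / 2) := by
    rw [neg_div, rpow_neg pi_pos.le, mul_comm, ← div_eq_mul_inv]
  rw [hval] at key
  apply key.congr'
  filter_upwards [self_mem_nhdsWithin] with x hx
  have hx0 : (0:ℝ) < ‖x‖ := by
    simpa [norm_pos_iff] using hx
  rw [vg_subst ‖x‖ hx0]
  symm
  rw [show (‖x‖:ℝ) ^ d = ‖x‖ ^ ((d:ℝ)) from (rpow_natCast _ _).symm]
  rw [mul_comm (π ^ (-(d : ℝ) / 2)) (‖x‖ ^ (-(d:ℝ)))]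
  rw [← mul_assoc, ← mul_assoc, ← rpow_add hx0, add_neg_cancel, rpow_zero, one_mul]
end

section
/- Let j(x) = π^{-1} ∫₀^∞ e^{-s} (s² + x²)^{-1} ds for real x ≠ 0. Then |x| · j(x) tends to 1/2 as x → 0 (x ≠ 0). -/
/-!
Substituting `s = |x| t` turns `|x| ∫₀^∞ e^{-s} (s² + x²)⁻¹ ds` into the Laplace transform
`∫₀^∞ e^{-|x| t} (1 + t²)⁻¹ dt` of the integrable function `(1 + t²)⁻¹`, evaluated at `|x|`.
By dominated convergence that transform is right-continuous at `0`, where it equals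
`∫₀^∞ (1 + t²)⁻¹ dt = π / 2`.
-/

open MeasureTheory Real Filter Set Topology

theorem tendsto_setIntegral_exp_neg_mul_smul_Ioi {E : Type*} [NormedAddCommGroup E]
    [NormedSpace ℝ E] {f : ℝ → E} (hf : IntegrableOn f (Ioi 0)) :
    Tendsto (fun a : ℝ => ∫ t in Ioi 0, exp (-(a * t)) • f t) (𝓝[≥] 0)
      (𝓝 (∫ t in Ioi 0, f t)) := by
  have hlimit : ∀ t, Tendsto (fun a : ℝ => exp (-(a * t)) • f t) (𝓝[≥] 0) (𝓝 (f t)) := by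
    intro t
    have hcont : Continuous fun a : ℝ => exp (-(a * t)) • f t := by fun_prop
    simpa using hcont.tendsto' 0 _ (by simp) |>.mono_left nhdsWithin_le_nhds
  refine tendsto_integral_filter_of_dominated_convergence (‖f ·‖) ?_ ?_ hf.norm
    (ae_of_all _ hlimit)
  · exact Eventually.of_forall fun a =>
      ((by fun_prop : Continuous fun t : ℝ => exp (-(a * t))).aestronglyMeasurable).smul
        hf.aestronglyMeasurable
  · filter_upwards [self_mem_nhdsWithin] with a (ha : 0 ≤ a)
    filter_upwards [ae_restrict_mem measurableSet_Ioi] with t (ht : 0 < t)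
    have hexp : exp (-(a * t)) ≤ 1 := exp_le_one_iff.mpr (by nlinarith)
    rw [norm_smul, norm_of_nonneg (exp_pos _).le]
    exact mul_le_of_le_one_left (norm_nonneg _) hexp

theorem mul_setIntegral_exp_neg_mul_inv_sq_add_sq {a : ℝ} (ha : 0 < a) :
    a * ∫ s in Ioi 0, exp (-s) * (s ^ 2 + a ^ 2)⁻¹
      = ∫ t in Ioi 0, exp (-(a * t)) * (1 + t ^ 2)⁻¹ := by
  have hsubst := integral_comp_mul_left_Ioi' (fun s => exp (-s) * (s ^ 2 + a ^ 2)⁻¹) 0 ha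
  rw [mul_zero, smul_eq_mul] at hsubst
  have hscale : ∀ t : ℝ, exp (-(a * t)) * ((a * t) ^ 2 + a ^ 2)⁻¹
      = (a ^ 2)⁻¹ * (exp (-(a * t)) * (1 + t ^ 2)⁻¹) := by
    intro t
    rw [show (a * t) ^ 2 + a ^ 2 = a ^ 2 * (1 + t ^ 2) by ring, mul_inv]
    ring
  simp only [hscale, integral_const_mul] at hsubst
  rw [← hsubst]
  field_simp

/-- Small-space asymptotics of the Lévy density of the geometric 1-stable process in
dimension 1: `|x| j(x) → 1/2` as `x → 0`, where
`j(x) = π⁻¹ ∫₀^∞ e^{-s} (s² + x²)⁻¹ ds`. -/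
theorem geometric_one_stable_levy_density_small_space :
    Tendsto (fun x : ℝ =>
        |x| * (π⁻¹ * ∫ s in Set.Ioi (0 : ℝ), Real.exp (-s) * (s ^ 2 + x ^ 2)⁻¹))
      (nhdsWithin 0 {0}ᶜ) (nhds (1 / 2)) := by
  have habs : Tendsto (fun x : ℝ => |x|) (𝓝[≠] 0) (𝓝[≥] 0) :=
    tendsto_nhdsWithin_of_tendsto_nhds_of_eventually_within _
      (by simpa using continuous_abs.tendsto' (0 : ℝ) 0 abs_zero |>.mono_left nhdsWithin_le_nhds)
      (Eventually.of_forall fun x => abs_nonneg x)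
  have hlaplace := (tendsto_setIntegral_exp_neg_mul_smul_Ioi
    integrable_inv_one_add_sq.integrableOn).comp habs
  simp only [smul_eq_mul, integral_Ioi_inv_one_add_sq, arctan_zero, sub_zero] at hlaplace
  have hlimit : π⁻¹ * (π / 2) = 1 / 2 := by field_simp
  rw [← hlimit]
  refine (hlaplace.const_mul π⁻¹).congr' ?_
  filter_upwards [self_mem_nhdsWithin] with x (hx : x ≠ 0)
  rw [Function.comp_apply, ← sq_abs x,
    ← mul_setIntegral_exp_neg_mul_inv_sq_add_sq (abs_pos.mpr hx)]
  ring
end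

section
/- Let j(x) = π^{-1} ∫₀^∞ e^{-s} (s² + x²)^{-1} ds for real x ≠ 0. Then x² · j(x) tends to 1/π as |x| → ∞. -/
open MeasureTheory Real Filter

/-! Since `x² / (s² + x²) ≤ 1` and it tends to `1` pointwise as `|x| → ∞`, dominated convergence
with the integrable majorant `e^{-s}` gives `x² ∫₀^∞ e^{-s} (s² + x²)⁻¹ ds → ∫₀^∞ e^{-s} ds = 1`. -/

lemma tendsto_sq_comap_abs_atTop :
    Tendsto (fun x : ℝ => x ^ 2) (comap (fun x : ℝ => |x|) atTop) atTop :=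
  ((tendsto_pow_atTop two_ne_zero).comp tendsto_comap).congr fun x => sq_abs x

lemma tendsto_mul_integral_mul_inv_add_atTop {α : Type*} [MeasurableSpace α] {μ : Measure α}
    {f g : α → ℝ} (hf : Integrable f μ) (hg_meas : AEMeasurable g μ) (hg : ∀ a, 0 ≤ g a) :
    Tendsto (fun t : ℝ => t * ∫ a, f a * (g a + t)⁻¹ ∂μ) atTop (nhds (∫ a, f a ∂μ)) := by
  simp_rw [← integral_const_mul]
  apply tendsto_integral_filter_of_dominated_convergence (fun a => |f a|)
  · exact Eventually.of_forall fun t => (hf.aestronglyMeasurable.mul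
      (hg_meas.add_const t).inv.aestronglyMeasurable).const_mul t
  · filter_upwards [eventually_gt_atTop 0] with t ht
    refine Eventually.of_forall fun a => ?_
    have hden : 0 < g a + t := by linarith [hg a]
    have hratio : t * (g a + t)⁻¹ ≤ 1 := by
      rw [mul_inv_le_iff₀ hden]
      linarith [hg a]
    rw [norm_mul, norm_mul, Real.norm_of_nonneg ht.le, Real.norm_of_nonneg (inv_nonneg.2 hden.le),
      Real.norm_eq_abs, mul_left_comm]
    exact mul_le_of_le_one_right (abs_nonneg _) hratio
  · exact hf.abs
  · refine Eventually.of_forall fun a => ?_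
    have hfrac : Tendsto (fun t : ℝ => 1 - g a * (g a + t)⁻¹) atTop (nhds (1 - g a * 0)) :=
      tendsto_const_nhds.sub <| tendsto_const_nhds.mul <|
        (tendsto_atTop_add_const_left _ _ tendsto_id).inv_tendsto_atTop
    rw [mul_zero, sub_zero] at hfrac
    simpa using (hfrac.const_mul (f a)).congr' <| by
      filter_upwards [eventually_gt_atTop 0] with t ht
      have hden : g a + t ≠ 0 := by linarith [hg a]
      field_simp
      ring

/-- Large-space asymptotics of the Lévy density of the geometric 1-stable process in
dimension 1: `x² j(x) → 1/π` as `|x| → ∞`, where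
`j(x) = π⁻¹ ∫₀^∞ e^{-s} (s² + x²)⁻¹ ds`. -/
theorem geometric_one_stable_levy_density_large_space :
    Tendsto (fun x : ℝ =>
        x ^ 2 * (π⁻¹ * ∫ s in Set.Ioi (0 : ℝ), Real.exp (-s) * (s ^ 2 + x ^ 2)⁻¹))
      (comap (fun x : ℝ => |x|) atTop) (nhds (1 / π)) := by
  have hexp : IntegrableOn (fun s : ℝ => Real.exp (-s)) (Set.Ioi 0) := by
    simpa using exp_neg_integrableOn_Ioi 0 one_pos
  have hlim := (tendsto_mul_integral_mul_inv_add_atTop hexp (by fun_prop)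
    (fun s : ℝ => sq_nonneg s)).comp tendsto_sq_comap_abs_atTop
  rw [integral_exp_neg_Ioi_zero] at hlim
  simpa [one_div, mul_left_comm] using hlim.const_mul π⁻¹
end
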